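/- Let q = 11. The graph Γ of 11-ary simplex codes of dimension 2 contains a top consisting of precisely 3 simplex lines. -/
import Mathlib


open Submodule Module

/-- All columns of the 2×n matrix with rows `x` and `y` are nonzero and pairwise
non-proportional (equivalently, every 2×2 minor is nonzero). -/
def GoodPair {F : Type} [Field F] {n : ℕ} (x y : Fin n → F) : Prop :=
  ∀ i j : Fin n, i ≠ j → x i * y j ≠ x j * y i

/-- A simplex line: a 2-dimensional subspace spanned by the rows of a generator
matrix all of whose columns are nonzero and pairwise non-proportional. -/
def IsSimplexLine {F : Type} [Field F] {n : ℕ} (C : Submodule F (Fin n → F)) : Prop :=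
  ∃ x y : Fin n → F, GoodPair x y ∧ C = span F {x, y}

/-- A simplex point: a 1-dimensional subspace spanned by a vector with exactly
one zero coordinate. -/
def IsSimplexPoint {F : Type} [Field F] {n : ℕ} (P : Submodule F (Fin n → F)) : Prop :=
  ∃ x : Fin n → F, (∃! i, x i = 0) ∧ P = span F {x}

/-- Two simplex points are collinear: they are spanned by the two rows of a
generator matrix of a simplex code, i.e. there is a simplex line containing both. -/
def PtCollinear {F : Type} [Field F] {n : ℕ} (P Q : Submodule F (Fin n → F)) : Prop :=
  ∃ x y : Fin n → F, GoodPair x y ∧ P = span F {x} ∧ Q = span F {y}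

/-- A clique of the graph Γ of simplex lines: all members are simplex lines and
any two distinct members intersect in a 1-dimensional subspace. -/
def IsGammaClique {F : Type} [Field F] {n : ℕ} (T : Set (Submodule F (Fin n → F))) : Prop :=
  (∀ L ∈ T, IsSimplexLine L) ∧
    ∀ L ∈ T, ∀ L' ∈ T, L ≠ L' → finrank F ↥(L ⊓ L') = 1

/-- A top of Γ: a maximal clique of Γ consisting of all simplex lines contained
in a fixed 3-dimensional subspace (projective plane). -/
def IsGammaTop {F : Type} [Field F] {n : ℕ} (T : Set (Submodule F (Fin n → F))) : Prop :=
  IsGammaClique T ∧ (∀ T' : Set (Submodule F (Fin n → F)), IsGammaClique T' → T ⊆ T' → T' = T) ∧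
    ∃ W : Submodule F (Fin n → F), finrank F ↥W = 3 ∧
      T = {L | IsSimplexLine L ∧ L ≤ W}

/-- A monomial linear automorphism: `x ↦ (a₁ x_{σ(1)}, …, aₙ x_{σ(n)})` with all
`aᵢ` nonzero and `σ` a permutation. -/
def IsMonomial {F : Type} [Field F] {n : ℕ} (l : (Fin n → F) ≃ₗ[F] (Fin n → F)) : Prop :=
  ∃ (a : Fin n → F) (σ : Equiv.Perm (Fin n)),
    (∀ i, a i ≠ 0) ∧ ∀ (x : Fin n → F) (i : Fin n), l x i = a i * x (σ i)

/-- Coordinatewise inversion `I` (with `0⁻¹ = 0`). -/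
def vecInv {F : Type} [Field F] {n : ℕ} (x : Fin n → F) : Fin n → F := fun i => (x i)⁻¹

instance : Fact (Nat.Prime 11) := ⟨by norm_num⟩

def r0 : Fin 12 → ZMod 11 := ![0,1,1,1,1,1,1,1,1,1,1,1]
def r1 : Fin 12 → ZMod 11 := ![1,0,4,1,2,3,5,6,7,8,9,10]
def r2 : Fin 12 → ZMod 11 := ![8,1,0,7,8,4,6,10,3,2,9,5]
def col (i : Fin 12) : Fin 3 → ZMod 11 := ![r0 i, r1 i, r2 i]
def det3 (p a b : Fin 3 → ZMod 11) : ZMod 11 :=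
  p 0 * (a 1 * b 2 - a 2 * b 1) - p 1 * (a 0 * b 2 - a 2 * b 0) + p 2 * (a 0 * b 1 - a 1 * b 0)
def cr (u v : Fin 3 → ZMod 11) : Fin 3 → ZMod 11 :=
  ![u 1 * v 2 - u 2 * v 1, u 2 * v 0 - u 0 * v 2, u 0 * v 1 - u 1 * v 0]

def Wsp : Submodule (ZMod 11) (Fin 12 → ZMod 11) := span (ZMod 11) {r0, r1, r2}
def Lsp1 : Submodule (ZMod 11) (Fin 12 → ZMod 11) := span (ZMod 11) {r1, r2}
def Lsp2 : Submodule (ZMod 11) (Fin 12 → ZMod 11) := span (ZMod 11) {r0, r2}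
def Lsp3 : Submodule (ZMod 11) (Fin 12 → ZMod 11) := span (ZMod 11) {r0, r1}

set_option maxHeartbeats 4000000 in
set_option maxRecDepth 100000 in
lemma key : ∀ a b c : ZMod 11,
    (∀ i j : Fin 12, i ≠ j → det3 ![a,b,c] (col i) (col j) ≠ 0) →
    (a ≠ 0 ∧ b = 0 ∧ c = 0) ∨ (a = 0 ∧ b ≠ 0 ∧ c = 0) ∨
      (a = 0 ∧ b = 0 ∧ c ≠ 0) := by decide

lemma gp12 : GoodPair r1 r2 := by unfold GoodPair; decide
lemma gp02 : GoodPair r0 r2 := by unfold GoodPair; decide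
lemma gp01 : GoodPair r0 r1 := by unfold GoodPair; decide

lemma crdotu (u v : Fin 3 → ZMod 11) :
    cr u v 0 * u 0 + cr u v 1 * u 1 + cr u v 2 * u 2 = 0 := by
  simp [cr]; ring

lemma crdotv (u v : Fin 3 → ZMod 11) :
    cr u v 0 * v 0 + cr u v 1 * v 1 + cr u v 2 * v 2 = 0 := by
  simp [cr]; ring

lemma gp_li {x y : Fin 12 → ZMod 11} (h : GoodPair x y) :
    LinearIndependent (ZMod 11) ![x, y] := by
  rw [LinearIndependent.pair_iff]
  intro s t hst
  have h01 : x 0 * y 1 ≠ x 1 * y 0 := h 0 1 (by decide)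
  have e0 : s * x 0 + t * y 0 = 0 := by simpa using congrFun hst 0
  have e1 : s * x 1 + t * y 1 = 0 := by simpa using congrFun hst 1
  have hs : s = 0 := by
    have hzz : s * (x 0 * y 1 - x 1 * y 0) = 0 := by linear_combination y 1 * e0 - y 0 * e1
    rcases mul_eq_zero.1 hzz with h' | h'
    · exact h'
    · exact absurd (sub_eq_zero.1 h') h01
  refine ⟨hs, ?_⟩
  rw [hs] at e0 e1
  simp at e0 e1
  rcases e0 with h' | h'
  · exact h'
  · rcases e1 with h'' | h''
    · exact h''
    · exact absurd (by rw [h', h'']; ring) h01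

lemma range_pair (x y : Fin 12 → ZMod 11) : Set.range ![x, y] = {x, y} := by
  rw [Matrix.range_cons, Matrix.range_cons_empty, Set.singleton_union]

lemma rank_span_pair {x y : Fin 12 → ZMod 11} (h : GoodPair x y) :
    finrank (ZMod 11) ↥(span (ZMod 11) ({x, y} : Set (Fin 12 → ZMod 11))) = 2 := by
  rw [← range_pair x y, finrank_span_eq_card (gp_li h)]
  simp

lemma rank1 : finrank (ZMod 11) ↥Lsp1 = 2 := rank_span_pair gp12
lemma rank2 : finrank (ZMod 11) ↥Lsp2 = 2 := rank_span_pair gp02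
lemma rank3 : finrank (ZMod 11) ↥Lsp3 = 2 := rank_span_pair gp01

lemma range_triple : Set.range ![r0, r1, r2] = {r0, r1, r2} := by
  rw [Matrix.range_cons, Matrix.range_cons, Matrix.range_cons_empty, Set.singleton_union,
    Set.singleton_union]

lemma li3 : LinearIndependent (ZMod 11) ![r0, r1, r2] := by
  rw [Fintype.linearIndependent_iff]
  intro g hg
  rw [Fin.sum_univ_three] at hg
  simp only [Matrix.cons_val_zero, Matrix.cons_val_one, Matrix.head_cons,
    Matrix.cons_val_two, Matrix.tail_cons] at hg
  have e0 : g 0 * r0 0 + g 1 * r1 0 + g 2 * r2 0 = 0 := by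
    have := congrFun hg 0; simpa [add_mul] using this
  have e1 : g 0 * r0 1 + g 1 * r1 1 + g 2 * r2 1 = 0 := by
    have := congrFun hg 1; simpa using this
  have e3 : g 0 * r0 3 + g 1 * r1 3 + g 2 * r2 3 = 0 := by
    have := congrFun hg 3; simpa using this
  rw [show r0 0 = 0 by decide, show r1 0 = 1 by decide, show r2 0 = 8 by decide] at e0
  rw [show r0 1 = 1 by decide, show r1 1 = 0 by decide, show r2 1 = 1 by decide] at e1
  rw [show r0 3 = 1 by decide, show r1 3 = 1 by decide, show r2 3 = 7 by decide] at e3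
  have h11 : (11 : ZMod 11) = 0 := by decide
  have hg2 : g 2 = 0 := by
    linear_combination (6 : ZMod 11) * e0 + 6 * e1 - 6 * e3 - g 2 * h11
  have hg0 : g 0 = 0 := by linear_combination e1 - hg2
  have hg1 : g 1 = 0 := by linear_combination e0 - (8 : ZMod 11) * hg2
  intro i
  fin_cases i <;> assumption

lemma rankW : finrank (ZMod 11) ↥Wsp = 3 := by
  rw [Wsp, ← range_triple, finrank_span_eq_card li3]
  simp

lemma wle {M : Submodule (ZMod 11) (Fin 12 → ZMod 11)} (h0 : r0 ∈ M) (h1 : r1 ∈ M)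
    (h2 : r2 ∈ M) : Wsp ≤ M := by
  rw [Wsp, span_le]
  rintro t (rfl | rfl | rfl) <;> assumption

lemma wle_absurd {M : Submodule (ZMod 11) (Fin 12 → ZMod 11)} (h : Wsp ≤ M)
    (hM : finrank (ZMod 11) ↥M = 2) : False := by
  have := Submodule.finrank_mono h
  rw [rankW, hM] at this
  omega

lemma mem12 : r1 ∈ Lsp1 := subset_span (by simp)
lemma mem13 : r2 ∈ Lsp1 := subset_span (by simp)
lemma mem20 : r0 ∈ Lsp2 := subset_span (by simp)
lemma mem23 : r2 ∈ Lsp2 := subset_span (by simp)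
lemma mem30 : r0 ∈ Lsp3 := subset_span (by simp)
lemma mem31 : r1 ∈ Lsp3 := subset_span (by simp)

lemma ne12 : Lsp1 ≠ Lsp2 := by
  intro h
  exact wle_absurd (wle mem20 (h ▸ mem12) mem23) rank2

lemma ne13 : Lsp1 ≠ Lsp3 := by
  intro h
  exact wle_absurd (wle mem30 mem31 (h.symm ▸ mem13)) rank3

lemma ne23 : Lsp2 ≠ Lsp3 := by
  intro h
  exact wle_absurd (wle mem30 mem31 (h.symm ▸ mem23)) rank3

lemma r0ne : r0 ≠ 0 := by
  intro h
  have : r0 1 ≠ 0 := by decide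
  exact this (by rw [h]; rfl)

lemma r1ne : r1 ≠ 0 := by
  intro h
  have : r1 0 ≠ 0 := by decide
  exact this (by rw [h]; rfl)

lemma r2ne : r2 ≠ 0 := by
  intro h
  have : r2 0 ≠ 0 := by decide
  exact this (by rw [h]; rfl)

lemma inter_rank {L L' : Submodule (ZMod 11) (Fin 12 → ZMod 11)}
    (hL : finrank (ZMod 11) ↥L = 2) (hL' : finrank (ZMod 11) ↥L' = 2) (hne : L ≠ L')
    {z : Fin 12 → ZMod 11} (hz : z ≠ 0) (h1 : z ∈ L) (h2 : z ∈ L') :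
    finrank (ZMod 11) ↥(L ⊓ L') = 1 := by
  have hle : L ⊓ L' ≤ L := inf_le_left
  have hub : finrank (ZMod 11) ↥(L ⊓ L') ≤ 2 := hL ▸ Submodule.finrank_mono hle
  have hlb : 1 ≤ finrank (ZMod 11) ↥(L ⊓ L') := by
    have hsp : span (ZMod 11) {z} ≤ L ⊓ L' := by
      rw [span_singleton_le_iff_mem, mem_inf]; exact ⟨h1, h2⟩
    have := Submodule.finrank_mono hsp
    rwa [finrank_span_singleton hz] at this
  have hne2 : finrank (ZMod 11) ↥(L ⊓ L') ≠ 2 := by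
    intro h2'
    have e1 : L ⊓ L' = L := Submodule.eq_of_le_of_finrank_le hle (by rw [hL, h2'])
    have hLle : L ≤ L' := by rw [← e1]; exact inf_le_right
    exact hne (Submodule.eq_of_le_of_finrank_le hLle (by rw [hL, hL']))
  omega

lemma rank_i12 : finrank (ZMod 11) ↥(Lsp1 ⊓ Lsp2) = 1 :=
  inter_rank rank1 rank2 ne12 r2ne mem13 mem23

lemma r2_not_L3 : r2 ∉ Lsp3 := by
  intro h
  exact wle_absurd (wle mem30 mem31 h) rank3

lemma bot123 : Lsp1 ⊓ Lsp2 ⊓ Lsp3 = ⊥ := by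
  have hsp : span (ZMod 11) {r2} ≤ Lsp1 ⊓ Lsp2 := by
    rw [span_singleton_le_iff_mem, mem_inf]; exact ⟨mem13, mem23⟩
  have h12 : span (ZMod 11) {r2} = Lsp1 ⊓ Lsp2 :=
    Submodule.eq_of_le_of_finrank_le hsp (by rw [rank_i12, finrank_span_singleton r2ne])
  rw [eq_bot_iff]
  intro v hv
  rw [mem_inf, ← h12] at hv
  obtain ⟨hv12, hv3⟩ := hv
  obtain ⟨c, rfl⟩ := mem_span_singleton.1 hv12
  by_cases hc : c = 0
  · simp [hc]
  · exfalso
    exact r2_not_L3 (by simpa [hc] using Submodule.smul_mem Lsp3 c⁻¹ hv3)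

lemma L1leW : Lsp1 ≤ Wsp := by
  rw [Lsp1, span_le]
  rintro t (rfl | rfl) <;> exact subset_span (by simp [Wsp])
lemma L2leW : Lsp2 ≤ Wsp := by
  rw [Lsp2, span_le]
  rintro t (rfl | rfl) <;> exact subset_span (by simp [Wsp])
lemma L3leW : Lsp3 ≤ Wsp := by
  rw [Lsp3, span_le]
  rintro t (rfl | rfl) <;> exact subset_span (by simp [Wsp])

lemma class_lem {L : Submodule (ZMod 11) (Fin 12 → ZMod 11)} (hsl : IsSimplexLine L)
    (hW : L ≤ Wsp) : L = Lsp1 ∨ L = Lsp2 ∨ L = Lsp3 := by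
  obtain ⟨x, y, hgp, rfl⟩ := hsl
  have hx : x ∈ span (ZMod 11) (Set.range ![r0, r1, r2]) := by
    rw [range_triple]
    exact hW (subset_span (by simp))
  have hy : y ∈ span (ZMod 11) (Set.range ![r0, r1, r2]) := by
    rw [range_triple]
    exact hW (subset_span (by simp))
  obtain ⟨u, hu⟩ := (mem_span_range_iff_exists_fun _).1 hx
  obtain ⟨v, hv⟩ := (mem_span_range_iff_exists_fun _).1 hy
  rw [Fin.sum_univ_three] at hu hv
  simp only [Matrix.cons_val_zero, Matrix.cons_val_one, Matrix.head_cons,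
    Matrix.cons_val_two, Matrix.tail_cons] at hu hv
  have hxi : ∀ i, x i = u 0 * r0 i + u 1 * r1 i + u 2 * r2 i := by
    intro i
    have h := congrFun hu i
    simp only [Pi.add_apply, Pi.smul_apply, smul_eq_mul] at h
    exact h.symm
  have hyi : ∀ i, y i = v 0 * r0 i + v 1 * r1 i + v 2 * r2 i := by
    intro i
    have h := congrFun hv i
    simp only [Pi.add_apply, Pi.smul_apply, smul_eq_mul] at h
    exact h.symm
  have hdet : ∀ i j : Fin 12, i ≠ j →
      det3 ![cr u v 0, cr u v 1, cr u v 2] (col i) (col j) ≠ 0 := by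
    intro i j hij
    have heq : det3 ![cr u v 0, cr u v 1, cr u v 2] (col i) (col j)
        = x i * y j - x j * y i := by
      rw [hxi i, hxi j, hyi i, hyi j]
      simp only [det3, cr, col, Matrix.cons_val_zero, Matrix.cons_val_one, Matrix.head_cons,
        Matrix.cons_val_two, Matrix.tail_cons]
      ring
    rw [heq]
    exact sub_ne_zero_of_ne (hgp i j hij)
  have span_eq : ∀ (w1 w2 : Fin 12 → ZMod 11), GoodPair w1 w2 →
      x ∈ span (ZMod 11) {w1, w2} → y ∈ span (ZMod 11) {w1, w2} →
      span (ZMod 11) {x, y} = span (ZMod 11) {w1, w2} := by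
    intro w1 w2 hgw hxw hyw
    refine Submodule.eq_of_le_of_finrank_le ?_ ?_
    · rw [span_le]
      exact Set.insert_subset_iff.mpr ⟨hxw, Set.singleton_subset_iff.mpr hyw⟩
    · rw [rank_span_pair hgp, rank_span_pair hgw]
  rcases key (cr u v 0) (cr u v 1) (cr u v 2) hdet with ⟨h0, h1, h2⟩ | ⟨h0, h1, h2⟩ | ⟨h0, h1, h2⟩
  · left
    have hu0 : u 0 = 0 := by
      have h := crdotu u v
      rw [h1, h2] at h
      simp only [zero_mul, add_zero] at h
      rcases mul_eq_zero.1 h with h' | h'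
      · exact absurd h' h0
      · exact h'
    have hv0 : v 0 = 0 := by
      have h := crdotv u v
      rw [h1, h2] at h
      simp only [zero_mul, add_zero] at h
      rcases mul_eq_zero.1 h with h' | h'
      · exact absurd h' h0
      · exact h'
    have hxm : x ∈ Lsp1 := by
      rw [← hu, hu0, zero_smul, zero_add]
      exact add_mem (smul_mem _ _ mem12) (smul_mem _ _ mem13)
    have hym : y ∈ Lsp1 := by
      rw [← hv, hv0, zero_smul, zero_add]
      exact add_mem (smul_mem _ _ mem12) (smul_mem _ _ mem13)
    exact span_eq r1 r2 gp12 hxm hym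
  · right; left
    have hu1 : u 1 = 0 := by
      have h := crdotu u v
      rw [h0, h2] at h
      simp only [zero_mul, add_zero, zero_add] at h
      rcases mul_eq_zero.1 h with h' | h'
      · exact absurd h' h1
      · exact h'
    have hv1 : v 1 = 0 := by
      have h := crdotv u v
      rw [h0, h2] at h
      simp only [zero_mul, add_zero, zero_add] at h
      rcases mul_eq_zero.1 h with h' | h'
      · exact absurd h' h1
      · exact h'
    have hxm : x ∈ Lsp2 := by
      rw [← hu, hu1, zero_smul, add_zero]
      exact add_mem (smul_mem _ _ mem20) (smul_mem _ _ mem23)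
    have hym : y ∈ Lsp2 := by
      rw [← hv, hv1, zero_smul, add_zero]
      exact add_mem (smul_mem _ _ mem20) (smul_mem _ _ mem23)
    exact span_eq r0 r2 gp02 hxm hym
  · right; right
    have hu2 : u 2 = 0 := by
      have h := crdotu u v
      rw [h0, h1] at h
      simp only [zero_mul, add_zero, zero_add] at h
      rcases mul_eq_zero.1 h with h' | h'
      · exact absurd h' h2
      · exact h'
    have hv2 : v 2 = 0 := by
      have h := crdotv u v
      rw [h0, h1] at h
      simp only [zero_mul, add_zero, zero_add] at h
      rcases mul_eq_zero.1 h with h' | h'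
      · exact absurd h' h2
      · exact h'
    have hxm : x ∈ Lsp3 := by
      rw [← hu, hu2, zero_smul, add_zero]
      exact add_mem (smul_mem _ _ mem30) (smul_mem _ _ mem31)
    have hym : y ∈ Lsp3 := by
      rw [← hv, hv2, zero_smul, add_zero]
      exact add_mem (smul_mem _ _ mem30) (smul_mem _ _ mem31)
    exact span_eq r0 r1 gp01 hxm hym

/-- For q = 11, the graph Γ of 11-ary simplex codes of dimension 2 contains a
top consisting of precisely 3 simplex lines. -/
theorem q11_top_with_three_lines :
    ∃ T : Set (Submodule (ZMod 11) (Fin 12 → ZMod 11)), IsGammaTop T ∧ T.ncard = 3 := by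
  refine ⟨{Lsp1, Lsp2, Lsp3}, ⟨⟨?_, ?_⟩, ?_, Wsp, rankW, ?_⟩, ?_⟩
  · intro L hL
    simp only [Set.mem_insert_iff, Set.mem_singleton_iff] at hL
    rcases hL with rfl | rfl | rfl
    exacts [⟨r1, r2, gp12, rfl⟩, ⟨r0, r2, gp02, rfl⟩, ⟨r0, r1, gp01, rfl⟩]
  · intro L hL L' hL' hne
    simp only [Set.mem_insert_iff, Set.mem_singleton_iff] at hL hL'
    rcases hL with rfl | rfl | rfl <;> rcases hL' with rfl | rfl | rfl
    · exact absurd rfl hne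
    · exact inter_rank rank1 rank2 ne12 r2ne mem13 mem23
    · exact inter_rank rank1 rank3 ne13 r1ne mem12 mem31
    · exact inter_rank rank2 rank1 ne12.symm r2ne mem23 mem13
    · exact absurd rfl hne
    · exact inter_rank rank2 rank3 ne23 r0ne mem20 mem30
    · exact inter_rank rank3 rank1 ne13.symm r1ne mem31 mem12
    · exact inter_rank rank3 rank2 ne23.symm r0ne mem30 mem20
    · exact absurd rfl hne
  · intro T' hT' hsub
    refine Set.Subset.antisymm ?_ hsub
    intro L' hL'
    by_cases hmem : L' ∈ ({Lsp1, Lsp2, Lsp3} : Set (Submodule (ZMod 11) (Fin 12 → ZMod 11)))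
    · exact hmem
    exfalso
    simp only [Set.mem_insert_iff, Set.mem_singleton_iff, not_or] at hmem
    obtain ⟨hm1, hm2, hm3⟩ := hmem
    have hsl := hT'.1 L' hL'
    by_cases hw : L' ≤ Wsp
    · rcases class_lem hsl hw with h | h | h
      exacts [hm1 h, hm2 h, hm3 h]
    · obtain ⟨x, y, hgp, hLeq⟩ := hsl
      have hrk' : finrank (ZMod 11) ↥L' = 2 := by rw [hLeq]; exact rank_span_pair hgp
      have hs1 : Lsp1 ∈ T' := hsub (by simp)
      have hs2 : Lsp2 ∈ T' := hsub (by simp)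
      have hs3 : Lsp3 ∈ T' := hsub (by simp)
      have h1 := hT'.2 L' hL' Lsp1 hs1 hm1
      have h2 := hT'.2 L' hL' Lsp2 hs2 hm2
      have h3 := hT'.2 L' hL' Lsp3 hs3 hm3
      have hfub : finrank (ZMod 11) ↥(L' ⊓ Wsp) ≤ 2 :=
        hrk' ▸ Submodule.finrank_mono inf_le_left
      have hne2 : finrank (ZMod 11) ↥(L' ⊓ Wsp) ≠ 2 := by
        intro h
        have he : L' ⊓ Wsp = L' :=
          Submodule.eq_of_le_of_finrank_le inf_le_left (by rw [hrk', h])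
        exact hw (by rw [← he]; exact inf_le_right)
      have hge : 1 ≤ finrank (ZMod 11) ↥(L' ⊓ Wsp) := by
        have hmono := Submodule.finrank_mono (inf_le_inf_left L' L1leW)
        rw [h1] at hmono
        exact hmono
      have hfw : finrank (ZMod 11) ↥(L' ⊓ Wsp) = 1 := by omega
      have e1 : L' ⊓ Lsp1 = L' ⊓ Wsp :=
        Submodule.eq_of_le_of_finrank_le (inf_le_inf_left L' L1leW) (by rw [hfw, h1])
      have e2 : L' ⊓ Lsp2 = L' ⊓ Wsp :=
        Submodule.eq_of_le_of_finrank_le (inf_le_inf_left L' L2leW) (by rw [hfw, h2])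
      have e3 : L' ⊓ Lsp3 = L' ⊓ Wsp :=
        Submodule.eq_of_le_of_finrank_le (inf_le_inf_left L' L3leW) (by rw [hfw, h3])
      have hle : L' ⊓ Wsp ≤ Lsp1 ⊓ Lsp2 ⊓ Lsp3 := by
        refine le_inf (le_inf ?_ ?_) ?_
        · rw [← e1]; exact inf_le_right
        · rw [← e2]; exact inf_le_right
        · rw [← e3]; exact inf_le_right
      rw [bot123, le_bot_iff] at hle
      rw [hle, finrank_bot] at hfw
      omega
  · ext M
    simp only [Set.mem_insert_iff, Set.mem_singleton_iff, Set.mem_setOf_eq]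
    constructor
    · rintro (rfl | rfl | rfl)
      exacts [⟨⟨r1, r2, gp12, rfl⟩, L1leW⟩, ⟨⟨r0, r2, gp02, rfl⟩, L2leW⟩,
        ⟨⟨r0, r1, gp01, rfl⟩, L3leW⟩]
    · rintro ⟨hsl, hle⟩
      exact class_lem hsl hle
  · exact Set.ncard_eq_three.mpr ⟨Lsp1, Lsp2, Lsp3, ne12, ne13, ne23, rfl⟩
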